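/- Let S be a string, let Y be a substring of S, and let X = S[1..p] be a prefix of S with per(X) = ρ and p ≥ 2ρ, such that (X,Y) is a 2-cover of S. Then for every integer k ≥ 0 with p − kρ ≥ ρ, the pair (S[1..p−kρ], Y) is also a 2-cover of S. -/
import Mathlib


variable {α : Type*}

/-- `sub S i j` is the substring `S[i..j]` (1-indexed, inclusive endpoints). -/
def sub (S : List α) (i j : ℕ) : List α := (S.take j).drop (i - 1)

/-- `ρ` is a period of `T`: `1 ≤ ρ` and `T[i] = T[i+ρ]` for all valid `i`. -/
def IsPeriod (T : List α) (ρ : ℕ) : Prop :=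
  1 ≤ ρ ∧ ∀ i : ℕ, i + ρ < T.length → T[i]? = T[i + ρ]?

/-- The minimal period of `T`. -/
noncomputable def per (T : List α) : ℕ := sInf {ρ : ℕ | IsPeriod T ρ}

/-- The substring `X` covers index `i` of `S`. -/
def Covers (S X : List α) (i : ℕ) : Prop :=
  ∃ j₁ j₂ : ℕ, 1 ≤ j₁ ∧ j₁ ≤ i ∧ i ≤ j₂ ∧ j₂ ≤ S.length ∧ sub S j₁ j₂ = X

/-- `(X, Y)` is a 2-cover of `S`: every index of `S` is covered by `X` or `Y`. -/
def TwoCover (S X Y : List α) : Prop :=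
  ∀ i : ℕ, 1 ≤ i → i ≤ S.length → Covers S X i ∨ Covers S Y i

lemma period_iter {X : List α} {ρ : ℕ} (h : IsPeriod X ρ) (t j : ℕ)
    (hj : j + t * ρ < X.length) : X[j]? = X[j + t * ρ]? := by
  induction t with
  | zero => simp
  | succ t ih =>
    have h1 : j + t * ρ < X.length := by
      have := h.1; nlinarith [hj]
    rw [ih h1]
    have := h.2 (j + t * ρ) (by have : j + t * ρ + ρ = j + (t + 1) * ρ := by ring
                                omega)
    rw [this]; congr 1; ring

lemma period_drop_take {X : List α} {ρ : ℕ} (h : IsPeriod X ρ) (t m : ℕ)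
    (hm : t * ρ + m ≤ X.length) : (X.drop (t * ρ)).take m = X.take m := by
  apply List.ext_getElem?
  intro j
  rw [List.getElem?_take, List.getElem?_take, List.getElem?_drop]
  split
  · rename_i hj
    rw [show t * ρ + j = j + t * ρ by ring]
    exact (period_iter h t j (by omega)).symm
  · rfl

/-- If `X = S[1..p]` is a prefix with `per X = ρ` and `p ≥ 2ρ`, and `(X,Y)` is
a 2-cover of `S`, then for every `k ≥ 0` with `p − kρ ≥ ρ`, the pair
`(S[1..p−kρ], Y)` is also a 2-cover of `S`. -/
theorem stmt18 (S Y : List α) (hY : Y <:+: S) (p ρ : ℕ)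
    (hp1 : 1 ≤ p) (hpn : p ≤ S.length)
    (hper : per (S.take p) = ρ) (h2 : 2 * ρ ≤ p)
    (hcov : TwoCover S (S.take p) Y)
    (k : ℕ) (hk : (k + 1) * ρ ≤ p) :
    TwoCover S (S.take (p - k * ρ)) Y := by
  have hXlen : (S.take p).length = p := by
    rw [List.length_take]; omega
  have hXper : IsPeriod (S.take p) ρ := by
    have hmem := Nat.sInf_mem (s := {ρ : ℕ | IsPeriod (S.take p) ρ})
      ⟨p, hp1, fun i hi => absurd hi (by rw [hXlen]; omega)⟩
    rw [← hper]
    exact hmem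
  have hρ1 : 1 ≤ ρ := hXper.1
  have hk' : k * ρ + ρ ≤ p := by
    have : (k + 1) * ρ = k * ρ + ρ := by ring
    omega
  obtain ⟨m, hkm⟩ : ∃ m, k * ρ + m = p := ⟨p - k * ρ, by omega⟩
  have hmeq : p - k * ρ = m := by omega
  rw [hmeq]
  have hρm : ρ ≤ m := by omega
  have hm1 : 1 ≤ m := by omega
  intro i hi1 hi2
  rcases hcov i hi1 hi2 with hX | hY'
  · left
    obtain ⟨j₁, j₂, hj1, hj1i, hij2, hj2n, hsub⟩ := hX
    have hlen : j₁ - 1 + p = j₂ := by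
      have := congrArg List.length hsub
      simp only [sub, List.length_drop, List.length_take] at this
      omega
    obtain ⟨d, hdeq⟩ : ∃ d, i = j₁ + d := ⟨i - j₁, by omega⟩
    set t : ℕ := min (d / ρ) k with ht
    have htk : t ≤ k := min_le_right _ _
    have htkρ : t * ρ ≤ k * ρ := Nat.mul_le_mul_right _ htk
    have htρm : t * ρ + m ≤ p := by omega
    have htρd : t * ρ ≤ d := by
      calc t * ρ ≤ (d / ρ) * ρ := Nat.mul_le_mul_right _ (min_le_left _ _)
        _ ≤ d := Nat.div_mul_le_self _ _
    have hdlt : d < t * ρ + m := by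
      rcases le_or_gt (d / ρ) k with hc | hc
      · have ht' : t = d / ρ := min_eq_left hc
        have h1 := Nat.div_add_mod' d ρ
        have h2 := Nat.mod_lt d (show 0 < ρ by omega)
        rw [ht']
        have : d < d / ρ * ρ + ρ := by omega
        omega
      · have ht' : t = k := min_eq_right hc.le
        have hdp : d < p := by omega
        rw [ht']; omega
    refine ⟨j₁ + t * ρ, j₁ + t * ρ + (m - 1), by omega, by omega, by omega, by omega, ?_⟩
    have hD : (S.drop (j₁ - 1)).take p = S.take p := by
      rw [← hsub]
      simp only [sub, List.drop_take]
      congr 1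
      omega
    have key : ((S.take p).drop (t * ρ)).take m = S.take m := by
      rw [period_drop_take hXper t m (by omega), List.take_take,
        min_eq_left (by omega)]
    calc sub S (j₁ + t * ρ) (j₁ + t * ρ + (m - 1))
        = (S.drop (j₁ + t * ρ - 1)).take (j₁ + t * ρ + (m - 1) - (j₁ + t * ρ - 1)) := by
          simp only [sub, List.drop_take]
      _ = ((S.drop (j₁ - 1)).drop (t * ρ)).take m := by
          rw [List.drop_drop]
          congr 2
          · omega
          · omega
      _ = (((S.drop (j₁ - 1)).take p).drop (t * ρ)).take m := by
          rw [List.drop_take, List.take_take, min_eq_left (by omega)]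
      _ = S.take m := by rw [hD, key]
  · right; exact hY'
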